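/- Fix r > 0 and define G : (0,∞) → ℝ by G(a) = (1/(2r)) ∫_{−∞}^{a} exp(−(u² + 1)/(4r)) du + (1/(2r)) ∫_0^1 exp(−(a² + 2ax + 1)/(4r)) dx. Then there exists a₀ > 0 such that for every a ≥ a₀, G(a) > √(π/r)·e^{−1/(4r)}; i.e., the Gaussian F-functional of the capped half-cylinder centered at an axis point strictly exceeds the corresponding F-functional value of the full round cylinder. -/

import Mathlib

open MeasureTheory Set

/-- The F-functional of the capped half-cylinder at scale r, centered at the axis point at
distance a inside the cylinder from the cap center, as a one-dimensional integral. -/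
noncomputable def G (r a : ℝ) : ℝ :=
  (1 / (2 * r)) * (∫ u in Set.Iic a, Real.exp (-(u ^ 2 + 1) / (4 * r))) +
  (1 / (2 * r)) * ∫ x in (0:ℝ)..1, Real.exp (-(a ^ 2 + 2 * a * x + 1) / (4 * r))

open Real Filter Topology

/-!
With `b = 1/(4r)`, `G r a` minus the cylinder value is `e^{-b}/(2r)` times the difference of the
cap integral `∫₀¹ e^{-b(a²+2ax)} dx` and the Gaussian tail `∫ₐ^∞ e^{-bu²} du`. Substituting
`u = a + x`, the tail over `(a, a+1]` is `∫₀¹ e^{-b(a²+2ax)} e^{-bx²} dx`, so the cap integral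
exceeds it by at least `e^{-b(a²+2a)} ∫₀¹ (1 - e^{-bx²}) dx`. The Mills-ratio bound puts the rest
of the tail below `e^{-b(a+1)²}/(2b(a+1))`, which is smaller once `a` is large.
-/

lemma integral_Ioi_exp_neg_mul_sq_le {b c : ℝ} (hb : 0 < b) (hc : 0 < c) :
    ∫ u in Ioi c, exp (-b * u ^ 2) ≤ exp (-b * c ^ 2) / (2 * b * c) := by
  have hderiv : ∀ u ∈ Ici c, HasDerivAt (fun u ↦ -(exp (-b * u ^ 2) / (2 * b)))
      (u * exp (-b * u ^ 2)) u := fun u _ ↦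
    (((hasDerivAt_pow 2 u).const_mul (-b)).exp.div_const (2 * b)).neg.congr_deriv
      (by field_simp; ring)
  have hlim : Tendsto (fun u ↦ -(exp (-b * u ^ 2) / (2 * b))) atTop (𝓝 0) := by
    have := ((tendsto_exp_atBot.comp ((tendsto_pow_atTop two_ne_zero).const_mul_atTop_of_neg
      (neg_lt_zero.2 hb))).div_const (2 * b)).neg
    simpa [Function.comp_def] using this
  have hmoment : ∫ u in Ioi c, u * exp (-b * u ^ 2) = exp (-b * c ^ 2) / (2 * b) := by
    rw [integral_Ioi_of_hasDerivAt_of_tendsto' hderiv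
      (integrable_mul_exp_neg_mul_sq hb).integrableOn hlim]
    ring
  calc ∫ u in Ioi c, exp (-b * u ^ 2)
      ≤ ∫ u in Ioi c, c⁻¹ * (u * exp (-b * u ^ 2)) := by
        refine setIntegral_mono_on (integrable_exp_neg_mul_sq hb).integrableOn
          ((integrable_mul_exp_neg_mul_sq hb).integrableOn.const_mul _) measurableSet_Ioi
          fun u (hu : c < u) ↦ ?_
        rw [← mul_assoc]
        exact le_mul_of_one_le_left (exp_pos _).le ((one_le_inv_mul₀ hc).2 hu.le)
    _ = exp (-b * c ^ 2) / (2 * b * c) := by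
        rw [integral_const_mul, hmoment]
        field_simp

lemma exp_neg_mul_add_sq (b a x : ℝ) :
    exp (-b * (x + a) ^ 2) = exp (-b * (a ^ 2 + 2 * a * x)) * exp (-b * x ^ 2) := by
  rw [← exp_add]
  ring_nf

lemma integral_Ioc_add_one_exp_neg_mul_sq (b a : ℝ) :
    ∫ u in Ioc a (a + 1), exp (-b * u ^ 2) =
      ∫ x in (0:ℝ)..1, exp (-b * (a ^ 2 + 2 * a * x)) * exp (-b * x ^ 2) := by
  simp_rw [← exp_neg_mul_add_sq]
  rw [intervalIntegral.integral_comp_add_right (fun u ↦ exp (-b * u ^ 2)), zero_add, add_comm 1,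
    intervalIntegral.integral_of_le (by linarith)]

lemma integral_one_sub_exp_neg_mul_sq_pos {b : ℝ} (hb : 0 < b) :
    0 < ∫ x in (0:ℝ)..1, (1 - exp (-b * x ^ 2)) := by
  have hcont : Continuous fun x : ℝ ↦ 1 - exp (-b * x ^ 2) := by fun_prop
  refine intervalIntegral.intervalIntegral_pos_of_pos_on (hcont.intervalIntegrable 0 1)
    (fun x hx ↦ ?_) zero_lt_one
  have : -b * x ^ 2 < 0 := by nlinarith [mul_pos hb (pow_pos hx.1 2)]
  simpa using this

lemma mul_integral_one_sub_exp_neg_mul_sq_le {b a : ℝ} (hb : 0 < b) (ha : 0 ≤ a) :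
    exp (-b * (a ^ 2 + 2 * a)) * ∫ x in (0:ℝ)..1, (1 - exp (-b * x ^ 2)) ≤
      ∫ x in (0:ℝ)..1, exp (-b * (a ^ 2 + 2 * a * x)) * (1 - exp (-b * x ^ 2)) := by
  rw [← intervalIntegral.integral_const_mul]
  refine intervalIntegral.integral_mono_on zero_le_one
    (Continuous.intervalIntegrable (by fun_prop) _ _)
    (Continuous.intervalIntegrable (by fun_prop) _ _)
    fun x hx ↦ mul_le_mul_of_nonneg_right ?_ ?_
  · exact exp_le_exp.2 (by nlinarith [mul_nonneg (mul_nonneg hb.le ha) (sub_nonneg.2 hx.2)])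
  · exact sub_nonneg.2 (exp_le_one_iff.2 (by nlinarith [sq_nonneg x]))

lemma eventually_integral_Ioi_exp_neg_mul_sq_lt {b : ℝ} (hb : 0 < b) :
    ∀ᶠ a in atTop, ∫ u in Ioi a, exp (-b * u ^ 2) <
      ∫ x in (0:ℝ)..1, exp (-b * (a ^ 2 + 2 * a * x)) := by
  set C := ∫ x in (0:ℝ)..1, (1 - exp (-b * x ^ 2))
  have hC : 0 < C := integral_one_sub_exp_neg_mul_sq_pos hb
  filter_upwards [eventually_gt_atTop (2 * b * C)⁻¹] with a ha
  have ha0 : 0 < a := lt_trans (by positivity) ha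
  have hsplit : ∫ u in Ioi a, exp (-b * u ^ 2) =
      (∫ u in Ioc a (a + 1), exp (-b * u ^ 2)) + ∫ u in Ioi (a + 1), exp (-b * u ^ 2) := by
    rw [← Ioc_union_Ioi_eq_Ioi (by linarith : a ≤ a + 1)]
    exact setIntegral_union (Ioc_disjoint_Ioi le_rfl) measurableSet_Ioi
      (integrable_exp_neg_mul_sq hb).integrableOn (integrable_exp_neg_mul_sq hb).integrableOn
  have hfar : ∫ u in Ioi (a + 1), exp (-b * u ^ 2) < exp (-b * (a ^ 2 + 2 * a)) * C :=
    calc ∫ u in Ioi (a + 1), exp (-b * u ^ 2)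
        ≤ exp (-b * (a + 1) ^ 2) / (2 * b * (a + 1)) :=
          integral_Ioi_exp_neg_mul_sq_le hb (by linarith)
      _ ≤ exp (-b * (a ^ 2 + 2 * a)) / (2 * b * (a + 1)) :=
          div_le_div_of_nonneg_right (exp_le_exp.2 (by nlinarith)) (by positivity)
      _ < exp (-b * (a ^ 2 + 2 * a)) * C := by
          rw [div_lt_iff₀ (by positivity), mul_assoc]
          refine lt_mul_of_one_lt_right (exp_pos _) ?_
          rw [inv_lt_iff_one_lt_mul₀ (by positivity)] at ha
          nlinarith
  have hcap : ∫ x in (0:ℝ)..1, exp (-b * (a ^ 2 + 2 * a * x)) =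
      (∫ x in (0:ℝ)..1, exp (-b * (a ^ 2 + 2 * a * x)) * exp (-b * x ^ 2)) +
        ∫ x in (0:ℝ)..1, exp (-b * (a ^ 2 + 2 * a * x)) * (1 - exp (-b * x ^ 2)) := by
    rw [← intervalIntegral.integral_add (Continuous.intervalIntegrable (by fun_prop) _ _)
      (Continuous.intervalIntegrable (by fun_prop) _ _)]
    simp only [mul_sub, mul_one, add_sub_cancel]
  rw [hsplit, integral_Ioc_add_one_exp_neg_mul_sq, hcap]
  linarith [mul_integral_one_sub_exp_neg_mul_sq_le hb ha0.le]

lemma exp_neg_add_one_div (r x : ℝ) :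
    exp (-(x + 1) / (4 * r)) = exp (-1 / (4 * r)) * exp (-(4 * r)⁻¹ * x) := by
  rw [← exp_add]
  ring_nf

lemma G_eq (r a : ℝ) :
    G r a = 1 / (2 * r) * exp (-1 / (4 * r)) *
      ((∫ u in Iic a, exp (-(4 * r)⁻¹ * u ^ 2)) +
        ∫ x in (0:ℝ)..1, exp (-(4 * r)⁻¹ * (a ^ 2 + 2 * a * x))) := by
  simp only [G, exp_neg_add_one_div, integral_const_mul, intervalIntegral.integral_const_mul]
  ring

lemma sqrt_pi_div_mul_exp_eq {r : ℝ} (hr : 0 < r) :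
    √(π / r) * exp (-1 / (4 * r)) =
      1 / (2 * r) * exp (-1 / (4 * r)) * ∫ u, exp (-(4 * r)⁻¹ * u ^ 2) := by
  have hsqrt : √(π / (4 * r)⁻¹) = 2 * r * √(π / r) := by
    rw [show π / (4 * r)⁻¹ = (2 * r) ^ 2 * (π / r) by field_simp; ring,
      sqrt_mul (by positivity), sqrt_sq (by positivity)]
  rw [integral_gaussian, hsqrt]
  field_simp

/-- For all sufficiently large a, the F-functional G(a) of the capped half-cylinder strictly
exceeds the corresponding F-functional value √(π/r)·e^{−1/(4r)} of the full round cylinder. -/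
theorem stmt_16 (r : ℝ) (hr : 0 < r) :
    ∃ a₀ > (0:ℝ), ∀ a ≥ a₀,
      G r a > Real.sqrt (Real.pi / r) * Real.exp (-1 / (4 * r)) := by
  have hb : 0 < (4 * r)⁻¹ := by positivity
  obtain ⟨a₁, ha₁⟩ := eventually_atTop.1 (eventually_integral_Ioi_exp_neg_mul_sq_lt hb)
  refine ⟨max a₁ 1, by positivity, fun a ha ↦ ?_⟩
  have hint := integrable_exp_neg_mul_sq hb
  rw [G_eq, sqrt_pi_div_mul_exp_eq hr,
    ← intervalIntegral.integral_Iic_add_Ioi (b := a) hint.integrableOn hint.integrableOn]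
  gcongr
  exact ha₁ a (le_of_max_le_left ha)
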